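/- Let Q be an inverse quantal frame and X a Q-sheaf. Then any set 𝒮 of Hilbert sections of X which is downwards closed in X (if x ≤ s and s ∈ 𝒮 then x ∈ 𝒮) and satisfies ⋁𝒮 = 1_X is a Hilbert basis of X. -/

import Mathlib

/-- A unital involutive quantale: a complete lattice with an associative
multiplication preserving arbitrary joins in each variable, a unit `e`, and a
join-preserving involution. -/
structure InvQuantale (Q : Type*) [CompleteLattice Q] where
  mul : Q → Q → Q
  e : Q
  star : Q → Q
  mul_assoc : ∀ a b c, mul (mul a b) c = mul a (mul b c)
  sSup_mul : ∀ (S : Set Q) (b : Q), mul (sSup S) b = ⨆ a ∈ S, mul a b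
  mul_sSup : ∀ (a : Q) (S : Set Q), mul a (sSup S) = ⨆ b ∈ S, mul a b
  e_mul : ∀ a, mul e a = a
  mul_e : ∀ a, mul a e = a
  star_star : ∀ a, star (star a) = a
  star_mul : ∀ a b, star (mul a b) = mul (star b) (star a)
  star_sSup : ∀ S : Set Q, star (sSup S) = ⨆ a ∈ S, star a

/-- The set of partial units of a quantale. -/
def InvQuantale.PU {Q : Type*} [CompleteLattice Q] (Qs : InvQuantale Q) : Set Q :=
  {s | Qs.mul s (Qs.star s) ≤ Qs.e ∧ Qs.mul (Qs.star s) s ≤ Qs.e}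

/-- An inverse quantal frame: a unital involutive quantale which is a frame,
has a stable support, and whose partial units join to the top. -/
structure InverseQuantalFrame (Q : Type*) [Order.Frame Q] extends toQuantale : InvQuantale Q where
  supp : Q → Q
  supp_le_e : ∀ a, supp a ≤ e
  supp_sSup : ∀ S : Set Q, supp (sSup S) = ⨆ a ∈ S, supp a
  supp_le_mul_star : ∀ a, supp a ≤ mul a (star a)
  le_supp_mul : ∀ a, a ≤ mul (supp a) a
  supp_stable : ∀ b a, b ≤ e → supp (mul b a) = mul b (supp a)
  sSup_PU : sSup {s | mul s (star s) ≤ e ∧ mul (star s) s ≤ e} = ⊤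

/-- A left module over a quantale: a complete lattice with a unital associative
action preserving arbitrary joins in each variable. -/
structure QuantaleModule {Q : Type*} [CompleteLattice Q] (Qs : InvQuantale Q)
    (X : Type*) [CompleteLattice X] where
  act : Q → X → X
  act_mul : ∀ a b x, act (Qs.mul a b) x = act a (act b x)
  act_e : ∀ x, act Qs.e x = x
  sSup_act : ∀ (S : Set Q) (x : X), act (sSup S) x = ⨆ a ∈ S, act a x
  act_sSup : ∀ (a : Q) (S : Set X), act a (sSup S) = ⨆ x ∈ S, act a x

/-- A pre-Hilbert module over a quantale. -/
structure PreHilbertModule {Q : Type*} [CompleteLattice Q] (Qs : InvQuantale Q)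
    (X : Type*) [CompleteLattice X] extends QuantaleModule Qs X where
  inner : X → X → Q
  inner_act : ∀ a x y, inner (act a x) y = Qs.mul a (inner x y)
  sSup_inner : ∀ (S : Set X) (y : X), inner (sSup S) y = ⨆ x ∈ S, inner x y
  inner_star : ∀ x y, inner x y = Qs.star (inner y x)

namespace PreHilbertModule

variable {Q X : Type*} [CompleteLattice Q] [CompleteLattice X] {Qs : InvQuantale Q}

/-- A Hilbert section: `⟨x,s⟩s ≤ x` for all `x`. -/
def IsHilbertSection (H : PreHilbertModule Qs X) (s : X) : Prop :=
  ∀ x, H.act (H.inner x s) s ≤ x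

/-- A regular element: `⟨s,s⟩s = s`. -/
def IsRegularSection (H : PreHilbertModule Qs X) (s : X) : Prop :=
  H.act (H.inner s s) s = s

/-- A Hilbert basis: `x = ⋁_{t ∈ S} ⟨x,t⟩t` for all `x`. -/
def IsHilbertBasis (H : PreHilbertModule Qs X) (S : Set X) : Prop :=
  ∀ x, x = ⨆ t ∈ S, H.act (H.inner x t) t

/-- Non-degeneracy of the inner product. -/
def Nondegenerate (H : PreHilbertModule Qs X) : Prop :=
  ∀ x y, (∀ z, H.inner x z = H.inner y z) → x = y

end PreHilbertModule

/-- A `Q`-locale over an inverse quantal frame: a module which is a frame and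
satisfies the anchor condition. -/
structure QLocale {Q : Type*} [Order.Frame Q] (Qf : InverseQuantalFrame Q)
    (X : Type*) [Order.Frame X] extends QuantaleModule Qf.toQuantale X where
  anchor : ∀ b x, b ≤ Qf.e → act b x = act b ⊤ ⊓ x

/-- A `Q`-sheaf over an inverse quantal frame: a pre-Hilbert module which is a
frame, satisfies the anchor condition, and has a Hilbert basis. -/
structure QSheaf {Q : Type*} [Order.Frame Q] (Qf : InverseQuantalFrame Q)
    (X : Type*) [Order.Frame X] extends PreHilbertModule Qf.toQuantale X where
  anchor : ∀ b x, b ≤ Qf.e → act b x = act b ⊤ ⊓ x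
  hasBasis : ∃ S : Set X, ∀ x, x = ⨆ t ∈ S, act (inner x t) t

namespace QSheaf

variable {Q X : Type*} [Order.Frame Q] [Order.Frame X] {Qf : InverseQuantalFrame Q}

/-- The support `ς_X(x) = ⟨x,x⟩ ∧ e` of a `Q`-sheaf. -/
def sppX (H : QSheaf Qf X) (x : X) : Q := H.inner x x ⊓ Qf.e

/-- A local section: `ς_X(x)s = x` for all `x ≤ s`. -/
def IsLocalSection (H : QSheaf Qf X) (s : X) : Prop :=
  ∀ x ≤ s, H.act (H.sppX x) s = x

/-- A principal section: a local section with `⟨s,s⟩ ≤ e`. -/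
def IsPrincipalSection (H : QSheaf Qf X) (s : X) : Prop :=
  H.IsLocalSection s ∧ H.inner s s ≤ Qf.e

/-- A right local section: `x = s ∧ 1_Q·x` for all `x ≤ s`. -/
def IsRightLocalSection (H : QSheaf Qf X) (s : X) : Prop :=
  ∀ x ≤ s, x = s ⊓ H.act ⊤ x

/-- A local bisection: simultaneously a local section and a right local section. -/
def IsBisection (H : QSheaf Qf X) (s : X) : Prop :=
  H.IsLocalSection s ∧ H.IsRightLocalSection s

end QSheaf

/-!
Every element `x` of a `Q`-sheaf satisfies `x ≤ ⟨x,x⟩x`: writing `x = ⋁ᵤ ⟨x,u⟩u` over a Hilbert basis,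
each summand `a u` with `a = ⟨x,u⟩` lies below `ς(a) a u ≤ ς(a) x`, and `ς(a) ≤ a a* = ⟨a u, x⟩ ≤ ⟨x,x⟩`.
Since `⋁𝒮 = 1_X` and `X` is a frame, `x = ⋁_{s ∈ 𝒮} x ∧ s`; each `x ∧ s` lies in `𝒮`, so
`x ∧ s ≤ ⟨x ∧ s, x ∧ s⟩(x ∧ s) ≤ ⟨x, x ∧ s⟩(x ∧ s)`, a term of `⋁_{t ∈ 𝒮} ⟨x,t⟩t`.
The reverse inequality is the Hilbert section property of the elements of `𝒮`.
-/

theorem monotone_of_map_sSup {α β : Type*} [CompleteLattice α] [CompleteLattice β] {f : α → β}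
    (hf : ∀ S : Set α, f (sSup S) = ⨆ a ∈ S, f a) : Monotone f := fun a b hab => by
  have hpair := hf {a, b}
  rw [sSup_pair, sup_eq_right.mpr hab, iSup_pair] at hpair
  exact hpair ▸ le_sup_left

namespace PreHilbertModule

section

variable {Q X : Type*} [CompleteLattice Q] [CompleteLattice X] {Qs : InvQuantale Q}
  (H : PreHilbertModule Qs X)

theorem act_mono_left (x : X) : Monotone fun a => H.act a x :=
  monotone_of_map_sSup fun S => H.sSup_act S x

theorem act_mono_right (a : Q) : Monotone (H.act a) :=
  monotone_of_map_sSup (H.act_sSup a)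

theorem inner_mono_left (y : X) : Monotone fun x => H.inner x y :=
  monotone_of_map_sSup fun S => H.sSup_inner S y

theorem iSup_act_inner_le {S : Set X} (hsec : ∀ s ∈ S, H.IsHilbertSection s) (x : X) :
    ⨆ t ∈ S, H.act (H.inner x t) t ≤ x :=
  iSup₂_le fun t ht => hsec t ht x

end

theorem le_act_inner_self_of_isHilbertBasis {Q X : Type*} [Order.Frame Q] [CompleteLattice X]
    {Qf : InverseQuantalFrame Q} (H : PreHilbertModule Qf.toQuantale X) {T : Set X}
    (hT : H.IsHilbertBasis T) (x : X) : x ≤ H.act (H.inner x x) x := by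
  conv_lhs => rw [hT x]
  refine iSup₂_le fun u hu => ?_
  set a := H.inner x u
  have hau : H.act a u ≤ x := (hT x).symm ▸ le_iSup₂ (f := fun t _ => H.act (H.inner x t) t) u hu
  have hsupp : Qf.supp a ≤ H.inner x x :=
    calc Qf.supp a ≤ Qf.mul a (Qf.star a) := Qf.supp_le_mul_star a
      _ = H.inner (H.act a u) x := by rw [H.inner_act, ← H.inner_star]
      _ ≤ H.inner x x := H.inner_mono_left x hau
  calc H.act a u ≤ H.act (Qf.mul (Qf.supp a) a) u := H.act_mono_left u (Qf.le_supp_mul a)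
    _ = H.act (Qf.supp a) (H.act a u) := H.act_mul _ _ _
    _ ≤ H.act (Qf.supp a) x := H.act_mono_right _ hau
    _ ≤ H.act (H.inner x x) x := H.act_mono_left x hsupp

theorem le_iSup_act_inner_of_le_act_inner_self {Q X : Type*} [CompleteLattice Q] [Order.Frame X]
    {Qs : InvQuantale Q}
    (H : PreHilbertModule Qs X) (hself : ∀ x, x ≤ H.act (H.inner x x) x) {S : Set X}
    (hdc : ∀ x s, s ∈ S → x ≤ s → x ∈ S) (hcov : sSup S = ⊤) (x : X) :
    x ≤ ⨆ t ∈ S, H.act (H.inner x t) t := by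
  have hx : x = ⨆ s ∈ S, x ⊓ s := by rw [← inf_sSup_eq, hcov, inf_top_eq]
  refine hx.trans_le <| iSup₂_le fun s hs => ?_
  calc x ⊓ s ≤ H.act (H.inner (x ⊓ s) (x ⊓ s)) (x ⊓ s) := hself _
    _ ≤ H.act (H.inner x (x ⊓ s)) (x ⊓ s) := H.act_mono_left _ (H.inner_mono_left _ inf_le_left)
    _ ≤ _ := le_iSup₂ (f := fun t _ => H.act (H.inner x t) t) _ (hdc _ s hs inf_le_right)

end PreHilbertModule

/-- In a `Q`-sheaf, any downwards closed set of Hilbert sections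
whose join is the top is a Hilbert basis. -/
theorem stmt3 {Q X : Type*} [Order.Frame Q] [Order.Frame X]
    (Qf : InverseQuantalFrame Q) (H : QSheaf Qf X)
    (S : Set X)
    (hsec : ∀ s ∈ S, H.IsHilbertSection s)
    (hdc : ∀ x s, s ∈ S → x ≤ s → x ∈ S)
    (hcov : sSup S = ⊤) :
    H.IsHilbertBasis S := by
  obtain ⟨T, hT⟩ := H.hasBasis
  have hself := H.le_act_inner_self_of_isHilbertBasis hT
  exact fun x => le_antisymm
    (H.le_iSup_act_inner_of_le_act_inner_self hself hdc hcov x) (H.iSup_act_inner_le hsec x)
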